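/- The fixed set Fix(κ₁) = {v ∈ L_z | κ₁(v) = v} is exactly the set of ℤ-linear combinations of u₁ := (−1−i, 1−i) and u₂ := (i, i); moreover h(u₁, u₁) = −4, h(u₂, u₂) = −2, and h(u₁, u₂) = 0, so that Fix(κ₁) with the restricted form is a ℤ-lattice isometric to (ℤ², diag(−4, −2)). -/

import Mathlib

/-- The imaginary unit `i` in the Gaussian integers `ℤ[i]`. -/
def gi : GaussianInt := Zsqrtd.sqrtd

/-- The underlying `ℤ[i]`-module of the Gaussian lattice `L_z`. -/
abbrev Lz : Type := GaussianInt × GaussianInt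

/-- The Hermitian form of `L_z`, given by the matrix `[[-2, 1-i], [1+i, -2]]`;
conjugate-linear in the first argument, linear in the second. -/
def hz (x y : Lz) : GaussianInt :=
  star x.1 * (-2) * y.1 + star x.1 * (1 - gi) * y.2 +
    star x.2 * (1 + gi) * y.1 + star x.2 * (-2) * y.2

/-- An isometry of `L_z`: a `ℤ[i]`-linear bijection preserving the form `hz`. -/
def IsIsomLz (A : Lz → Lz) : Prop :=
  Function.Bijective A ∧ (∀ x y : Lz, A (x + y) = A x + A y) ∧
    (∀ (c : GaussianInt) (x : Lz), A (c • x) = c • A x) ∧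
    ∀ x y : Lz, hz (A x) (A y) = hz x y

/-- An involutive anti-isometry of `L_z`: an additive bijection `ν` with
`ν (c • v) = c̄ • ν v`, `hz (ν x) (ν y) = conj (hz x y)` and `ν ∘ ν = id`. -/
def IsInvAntiIsomLz (ν : Lz → Lz) : Prop :=
  Function.Bijective ν ∧ (∀ x y : Lz, ν (x + y) = ν x + ν y) ∧
    (∀ (c : GaussianInt) (x : Lz), ν (c • x) = star c • ν x) ∧
    (∀ x y : Lz, hz (ν x) (ν y) = star (hz x y)) ∧
    ∀ x : Lz, ν (ν x) = x

/-- The anti-isometry `κ₁ : (x₁, x₂) ↦ (−x̄₂, −x̄₁)` of `L_z`. -/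
def kappa1 (x : Lz) : Lz := (-(star x.2), -(star x.1))

/-- The anti-isometry `κ₃ : (x₁, x₂) ↦ (i·x̄₁, −x̄₂)` of `L_z`. -/
def kappa3 (x : Lz) : Lz := (gi * star x.1, -(star x.2))

/-!
A vector `(a, b)` is fixed by `κ₁` exactly when `a = -b̄`, so `Fix(κ₁)` is the free `ℤ`-module
of rank two parametrised by `b = x + y i`; in these coordinates `m • u₁ + n • u₂` has
second entry `m + (n - m) i`, which gives `(m, n) = (x, x + y)`. The Gram matrix of `u₁, u₂`
is computed directly, and sesquilinearity of `h` transports it to all integer combinations.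
-/

namespace Kappa1Fix

lemma hz_add_left (x x' y : Lz) : hz (x + x') y = hz x y + hz x' y := by
  simp only [hz, Prod.fst_add, Prod.snd_add, star_add]
  ring

lemma hz_add_right (x y y' : Lz) : hz x (y + y') = hz x y + hz x y' := by
  simp only [hz, Prod.fst_add, Prod.snd_add]
  ring

lemma hz_smul_left (c : GaussianInt) (x y : Lz) : hz (c • x) y = star c * hz x y := by
  simp only [hz, Prod.smul_fst, Prod.smul_snd, smul_eq_mul, star_mul']
  ring

lemma hz_smul_right (c : GaussianInt) (x y : Lz) : hz x (c • y) = c * hz x y := by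
  simp only [hz, Prod.smul_fst, Prod.smul_snd, smul_eq_mul]
  ring

lemma hz_zsmul_left (m : ℤ) (x y : Lz) : hz (m • x) y = m * hz x y := by
  rw [← Int.cast_smul_eq_zsmul GaussianInt, hz_smul_left, star_intCast]

lemma hz_zsmul_right (m : ℤ) (x y : Lz) : hz x (m • y) = m * hz x y := by
  rw [← Int.cast_smul_eq_zsmul GaussianInt, hz_smul_right]

def u₁ : Lz := (-1 - gi, 1 - gi)

def u₂ : Lz := (gi, gi)

def fixParam (p : ℤ × ℤ) : Lz := p.1 • u₁ + p.2 • u₂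

def fixCoords (v : Lz) : ℤ × ℤ := (v.2.re, v.2.re + v.2.im)

lemma fixParam_fst (p : ℤ × ℤ) : (fixParam p).1 = ⟨-p.1, p.2 - p.1⟩ := by
  ext <;> simp [fixParam, u₁, u₂, gi]; ring

lemma fixParam_snd (p : ℤ × ℤ) : (fixParam p).2 = ⟨p.1, p.2 - p.1⟩ := by
  ext <;> simp [fixParam, u₁, u₂, gi]; ring

lemma fixCoords_fixParam (p : ℤ × ℤ) : fixCoords (fixParam p) = p := by
  simp [fixCoords, fixParam_snd]

lemma kappa1_fixParam (p : ℤ × ℤ) : kappa1 (fixParam p) = fixParam p := by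
  ext <;> simp [kappa1, fixParam_fst, fixParam_snd]

lemma fixParam_fixCoords {v : Lz} (hv : kappa1 v = v) : fixParam (fixCoords v) = v := by
  have hfst : -star v.2 = v.1 := congrArg Prod.fst hv
  ext <;> simp [fixParam_fst, fixParam_snd, fixCoords, ← hfst]

lemma fixed_kappa1_eq_range : {v : Lz | kappa1 v = v} = Set.range fixParam :=
  Set.ext fun _ =>
    ⟨fun hv => ⟨_, fixParam_fixCoords hv⟩, by rintro ⟨p, rfl⟩; exact kappa1_fixParam p⟩

lemma hz_u₁_u₁ : hz u₁ u₁ = -4 := by decide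

lemma hz_u₂_u₂ : hz u₂ u₂ = -2 := by decide

lemma hz_u₁_u₂ : hz u₁ u₂ = 0 := by decide

lemma hz_u₂_u₁ : hz u₂ u₁ = 0 := by decide

lemma hz_fixParam (p q : ℤ × ℤ) :
    hz (fixParam p) (fixParam q) = ((-4 * (p.1 * q.1) + -2 * (p.2 * q.2) : ℤ) : GaussianInt) := by
  simp only [fixParam, hz_add_left, hz_add_right, hz_zsmul_left, hz_zsmul_right,
    hz_u₁_u₁, hz_u₂_u₂, hz_u₁_u₂, hz_u₂_u₁]
  push_cast
  ring

end Kappa1Fix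

open Kappa1Fix in
/-- The fixed set `Fix(κ₁)` of `κ₁` in `L_z` is exactly the set of
`ℤ`-linear combinations of `u₁ = (−1−i, 1−i)` and `u₂ = (i, i)`; moreover
`h(u₁,u₁) = −4`, `h(u₂,u₂) = −2`, `h(u₁,u₂) = 0`, so that `(m, n) ↦ m•u₁ + n•u₂` is an
isometry of `(ℤ², diag(−4,−2))` onto `Fix(κ₁)` with the restricted form. -/
theorem stmt10 :
    letI u₁ : Lz := (-1 - gi, 1 - gi)
    letI u₂ : Lz := (gi, gi)
    {v : Lz | kappa1 v = v} = {v : Lz | ∃ m n : ℤ, v = m • u₁ + n • u₂} ∧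
    hz u₁ u₁ = -4 ∧ hz u₂ u₂ = -2 ∧ hz u₁ u₂ = 0 ∧
    Function.Injective (fun p : ℤ × ℤ => p.1 • u₁ + p.2 • u₂) ∧
    ∀ m n m' n' : ℤ, hz (m • u₁ + n • u₂) (m' • u₁ + n' • u₂)
      = ((-4 * (m * m') + -2 * (n * n') : ℤ) : GaussianInt) := by
  refine ⟨?_, hz_u₁_u₁, hz_u₂_u₂, hz_u₁_u₂, ?_,
    fun m n m' n' => hz_fixParam (m, n) (m', n')⟩
  · exact fixed_kappa1_eq_range.trans <| Set.ext fun v =>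
      ⟨fun ⟨p, hp⟩ => ⟨p.1, p.2, hp.symm⟩, fun ⟨m, n, hv⟩ => ⟨(m, n), hv.symm⟩⟩
  · exact Function.LeftInverse.injective fixCoords_fixParam
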